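/- For |q|<1, 0 < μ < 1, 0 ≤ ν ≤ μ, m, y ∈ ℕ, the weighted sum identity ∑_{j=0}^m φ_{q,μ,ν}(j|m) q^{yj} (μ q^{m-j};q)_y = (μ;q)_y (ν q^m;q)_y / (ν;q)_y holds. -/

import Mathlib

noncomputable def qpR (a q : ℝ) (n : ℕ) : ℝ := ∏ i ∈ Finset.range n, (1 - a * q ^ i)

noncomputable def phi (q μ ν : ℝ) (j m : ℕ) : ℝ :=
  μ ^ j * qpR (ν / μ) q j * qpR μ q (m - j) * qpR q q m
    / (qpR ν q m * qpR q q j * qpR q q (m - j))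

/-!
With the Gaussian binomial `[m, j]_q = (q;q)_m / ((q;q)_j (q;q)_{m-j})` and the
homogeneous product `(a, b; q)_j = ∏_{i<j} (a - b q^i)`, the q-Chu–Vandermonde identity
`∑_j (a, b; q)_j (a;q)_{m-j} [m, j]_q = (b;q)_m` holds for all `a, b`, by induction on `m` through
q-Pascal's rule. Since `μ^j (ν/μ;q)_j = (μ, ν; q)_j`, the weight `q^{yj}` rescales it to
`(μq^y, νq^y; q)_j`, while `(μ;q)_{m-j} (μq^{m-j};q)_y = (μ;q)_y (μq^y;q)_{m-j}`. So each summand is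
`(μ;q)_y / (ν;q)_m` times a term of the identity with `a = μq^y`, `b = νq^y`, and the sum equals
`(μ;q)_y (νq^y;q)_m / (ν;q)_m = (μ;q)_y (νq^m;q)_y / (ν;q)_y`.
-/

lemma qpR_succ (a q : ℝ) (n : ℕ) : qpR a q (n + 1) = qpR a q n * (1 - a * q ^ n) :=
  Finset.prod_range_succ _ _

lemma qpR_add (a q : ℝ) (n k : ℕ) : qpR a q (n + k) = qpR a q n * qpR (a * q ^ n) q k := by
  rw [qpR, qpR, qpR, Finset.prod_range_add]
  congr 1
  refine Finset.prod_congr rfl fun i _ => ?_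
  ring

lemma qpR_mul_qpR_comm (a q : ℝ) (n k : ℕ) :
    qpR a q n * qpR (a * q ^ n) q k = qpR a q k * qpR (a * q ^ k) q n := by
  rw [← qpR_add, ← qpR_add, Nat.add_comm]

lemma qpR_pos {a q : ℝ} (ha : |a| < 1) (hq : |q| ≤ 1) (n : ℕ) : 0 < qpR a q n := by
  refine Finset.prod_pos fun i _ => ?_
  have hlt : |a * q ^ i| < 1 := by
    rw [abs_mul, abs_pow]
    calc |a| * |q| ^ i ≤ |a| * 1 := by gcongr; exact pow_le_one₀ (abs_nonneg q) hq
      _ < 1 := by rwa [mul_one]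
  linarith [le_abs_self (a * q ^ i)]

noncomputable def qBinom (q : ℝ) : ℕ → ℕ → ℝ
  | 0, 0 => 1
  | 0, _ + 1 => 0
  | m + 1, 0 => qBinom q m 0
  | m + 1, j + 1 => qBinom q m (j + 1) + q ^ (m - j) * qBinom q m j

lemma qBinom_zero_right (q : ℝ) : ∀ m, qBinom q m 0 = 1
  | 0 => rfl
  | m + 1 => qBinom_zero_right q m

lemma qBinom_of_lt (q : ℝ) : ∀ {m j}, m < j → qBinom q m j = 0
  | 0, _ + 1, _ => rfl
  | m + 1, j + 1, h => by
    rw [qBinom, qBinom_of_lt q (by omega : m < j + 1), qBinom_of_lt q (by omega : m < j)]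
    ring

lemma qBinom_self (q : ℝ) : ∀ m, qBinom q m m = 1
  | 0 => rfl
  | m + 1 => by rw [qBinom, qBinom_of_lt q (Nat.lt_succ_self m), qBinom_self q m]; simp

lemma qpR_mul_qpR_mul_qBinom (q : ℝ) : ∀ {m j}, j ≤ m →
    qpR q q j * qpR q q (m - j) * qBinom q m j = qpR q q m
  | m, 0, _ => by simp [qpR, qBinom_zero_right]
  | m + 1, j + 1, h => by
    rcases Nat.lt_or_ge j m with hlt | hge
    · obtain ⟨k, rfl⟩ : ∃ k, m = j + 1 + k := ⟨m - (j + 1), by omega⟩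
      have ih₁ := qpR_mul_qpR_mul_qBinom q (Nat.le_add_right (j + 1) k)
      have ih₂ := qpR_mul_qpR_mul_qBinom q (by omega : j ≤ j + 1 + k)
      rw [show j + 1 + k - j = k + 1 by omega, qpR_succ] at ih₂
      rw [Nat.add_sub_cancel_left, qpR_succ q q j] at ih₁
      rw [qBinom, show j + 1 + k + 1 - (j + 1) = k + 1 by omega,
        show j + 1 + k - j = k + 1 by omega, qpR_succ q q (j + 1 + k), qpR_succ q q j,
        qpR_succ q q k]
      linear_combination (1 - q * q ^ k) * ih₁ + q * q ^ k * (1 - q * q ^ j) * ih₂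
    · obtain rfl : j = m := by omega
      rw [qBinom_self, Nat.sub_self]
      simp [qpR]

lemma qBinom_eq_div {q : ℝ} {m j : ℕ} (h : j ≤ m) (hj : qpR q q j ≠ 0)
    (hmj : qpR q q (m - j) ≠ 0) :
    qBinom q m j = qpR q q m / (qpR q q j * qpR q q (m - j)) := by
  rw [eq_div_iff (mul_ne_zero hj hmj), ← qpR_mul_qpR_mul_qBinom q h]
  ring

noncomputable def qpHom (a b q : ℝ) (j : ℕ) : ℝ := ∏ i ∈ Finset.range j, (a - b * q ^ i)

lemma qpHom_succ (a b q : ℝ) (j : ℕ) : qpHom a b q (j + 1) = qpHom a b q j * (a - b * q ^ j) :=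
  Finset.prod_range_succ _ _

lemma qpHom_mul_pow (a b c q : ℝ) (j : ℕ) :
    qpHom a b q j * c ^ j = qpHom (a * c) (b * c) q j := by
  simp only [qpHom, mul_right_comm b c, ← sub_mul, Finset.prod_mul_distrib, Finset.prod_const,
    Finset.card_range]

lemma pow_mul_qpR_div {a : ℝ} (ha : a ≠ 0) (b q : ℝ) (j : ℕ) :
    a ^ j * qpR (b / a) q j = qpHom a b q j := by
  have hqpR : qpR (b / a) q j = qpHom 1 (b / a) q j := rfl
  rw [hqpR, mul_comm, qpHom_mul_pow, one_mul, div_mul_cancel₀ b ha]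

lemma sum_qpHom_mul_qpR_mul_qBinom_succ (a b q : ℝ) (m : ℕ) :
    ∑ j ∈ Finset.range (m + 2), qpHom a b q j * qpR a q (m + 1 - j) * qBinom q (m + 1) j
      = ∑ j ∈ Finset.range (m + 1), (qpHom a b q j * qpR a q (m + 1 - j)
          + qpHom a b q (j + 1) * qpR a q (m - j) * q ^ (m - j)) * qBinom q m j := by
  have hshift : ∑ j ∈ Finset.range (m + 1), qpHom a b q j * qpR a q (m + 1 - j) * qBinom q m j
      = ∑ j ∈ Finset.range (m + 1), qpHom a b q (j + 1) * qpR a q (m - j) * qBinom q m (j + 1)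
        + qpHom a b q 0 * qpR a q (m + 1) * qBinom q m 0 := by
    calc _ = ∑ j ∈ Finset.range (m + 2), qpHom a b q j * qpR a q (m + 1 - j) * qBinom q m j := by
          rw [Finset.sum_range_succ _ (m + 1), qBinom_of_lt q (Nat.lt_succ_self m), mul_zero,
            add_zero]
      _ = _ := by
          rw [Finset.sum_range_succ']
          simp only [Nat.add_sub_add_right, Nat.sub_zero]
  simp only [add_mul, Finset.sum_add_distrib, hshift]
  rw [Finset.sum_range_succ']
  simp only [qBinom, Nat.add_sub_add_right, Nat.sub_zero, mul_add, Finset.sum_add_distrib,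
    mul_assoc]
  ring

/-- The q-Chu–Vandermonde identity. -/
theorem sum_qpHom_mul_qpR_mul_qBinom (a b q : ℝ) : ∀ m : ℕ,
    ∑ j ∈ Finset.range (m + 1), qpHom a b q j * qpR a q (m - j) * qBinom q m j = qpR b q m
  | 0 => by simp [qpHom, qpR, qBinom]
  | m + 1 => by
    rw [sum_qpHom_mul_qpR_mul_qBinom_succ, qpR_succ, ← sum_qpHom_mul_qpR_mul_qBinom a b q m,
      Finset.sum_mul]
    refine Finset.sum_congr rfl fun j hj => ?_
    obtain ⟨k, rfl⟩ : ∃ k, m = j + k := ⟨m - j, by have := Finset.mem_range.mp hj; omega⟩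
    rw [show j + k + 1 - j = k + 1 by omega, Nat.add_sub_cancel_left, qpR_succ, qpHom_succ]
    ring

lemma phi_eq {q μ ν : ℝ} {j m : ℕ} (hμ : μ ≠ 0) (h : j ≤ m) (hj : qpR q q j ≠ 0)
    (hmj : qpR q q (m - j) ≠ 0) :
    phi q μ ν j m = qpHom μ ν q j * qpR μ q (m - j) * qBinom q m j / qpR ν q m := by
  rw [phi, pow_mul_qpR_div hμ, qBinom_eq_div h hj hmj]
  field_simp

lemma phi_mul_pow_mul_qpR {q μ ν : ℝ} {j m : ℕ} (hμ : μ ≠ 0) (h : j ≤ m) (hj : qpR q q j ≠ 0)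
    (hmj : qpR q q (m - j) ≠ 0) (y : ℕ) :
    phi q μ ν j m * q ^ (y * j) * qpR (μ * q ^ (m - j)) q y
      = qpR μ q y / qpR ν q m
        * (qpHom (μ * q ^ y) (ν * q ^ y) q j * qpR (μ * q ^ y) q (m - j) * qBinom q m j) := by
  rw [phi_eq hμ h hj hmj, ← qpHom_mul_pow, ← pow_mul, div_eq_mul_inv, div_eq_mul_inv]
  linear_combination (qpR ν q m)⁻¹ * qpHom μ ν q j * q ^ (y * j) * qBinom q m j
    * qpR_mul_qpR_comm μ q (m - j) y

theorem stmt11 (q μ ν : ℝ) (hq : |q| < 1) (hν : 0 ≤ ν) (hνμ : ν ≤ μ)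
    (hμ0 : 0 < μ) (hμ : μ < 1) (m y : ℕ) :
    ∑ j ∈ Finset.range (m + 1),
        phi q μ ν j m * q ^ (y * j) * qpR (μ * q ^ (m - j)) q y
      = qpR μ q y * qpR (ν * q ^ m) q y / qpR ν q y := by
  have hqq (n : ℕ) : qpR q q n ≠ 0 := (qpR_pos hq hq.le n).ne'
  have hνq (n : ℕ) : qpR ν q n ≠ 0 :=
    (qpR_pos (by rw [abs_of_nonneg hν]; linarith) hq.le n).ne'
  rw [Finset.sum_congr rfl fun j hj => phi_mul_pow_mul_qpR hμ0.ne'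
      (Nat.lt_succ_iff.mp (Finset.mem_range.mp hj)) (hqq j) (hqq (m - j)) y,
    ← Finset.mul_sum, sum_qpHom_mul_qpR_mul_qBinom]
  field_simp [hνq m, hνq y]
  linear_combination qpR μ q y * qpR_mul_qpR_comm ν q y m
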